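/- arXiv:math/0510218 — 9 statements merged into one kernel-verified Lean document; each statement's English description precedes it below -/
import Mathlib

section
/- Let F = MonoidAlgebra ℚ (FreeMonoid ℕ) with the three bilinear operations ≺, ∘, ≻ defined on basis words by Loday–Ronco's max-letter rule. Then the operation ∘ is associative: for all x, y, z ∈ F, (x ∘ y) ∘ z = x ∘ (y ∘ z). -/
/-- The right operation `≻` of the Loday–Ronco dendriform trialgebra structure on
noncommutative polynomials: on basis words, `u ≻ v = uv` if `u, v` are nonempty and
`max u < max v`, and `0` otherwise; extended bilinearly. -/
noncomputable def trSucc {α : Type*} [LinearOrder α]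
    (x y : MonoidAlgebra ℚ (FreeMonoid α)) : MonoidAlgebra ℚ (FreeMonoid α) :=
  x.coeff.sum fun u a => y.coeff.sum fun v b =>
    if u.toList ≠ [] ∧ v.toList ≠ [] ∧ u.toList.maximum < v.toList.maximum
    then MonoidAlgebra.single (u * v) (a * b) else 0

/-- The middle operation `∘`: on basis words, `u ∘ v = uv` if `u, v` are nonempty and
`max u = max v`, and `0` otherwise; extended bilinearly. -/
noncomputable def trCirc {α : Type*} [LinearOrder α]
    (x y : MonoidAlgebra ℚ (FreeMonoid α)) : MonoidAlgebra ℚ (FreeMonoid α) :=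
  x.coeff.sum fun u a => y.coeff.sum fun v b =>
    if u.toList ≠ [] ∧ v.toList ≠ [] ∧ u.toList.maximum = v.toList.maximum
    then MonoidAlgebra.single (u * v) (a * b) else 0

/-- The left operation `≺`: on basis words, `u ≺ v = uv` if `u, v` are nonempty and
`max u > max v`, and `0` otherwise; extended bilinearly. -/
noncomputable def trPrec {α : Type*} [LinearOrder α]
    (x y : MonoidAlgebra ℚ (FreeMonoid α)) : MonoidAlgebra ℚ (FreeMonoid α) :=
  x.coeff.sum fun u a => y.coeff.sum fun v b =>
    if u.toList ≠ [] ∧ v.toList ≠ [] ∧ v.toList.maximum < u.toList.maximum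
    then MonoidAlgebra.single (u * v) (a * b) else 0

/-!
On basis words, `u ∘ v` is `uv` exactly when `u` and `v` are nonempty with the same greatest
letter, and then `uv` has that greatest letter too. Hence `(u ∘ v) ∘ w` and `u ∘ (v ∘ w)` are both
`uvw` when `u`, `v`, `w` are nonempty with a common greatest letter, and both `0` otherwise;
associativity on all of `F` follows by biadditivity.
-/

theorem MonoidAlgebra.assoc_of_single_assoc {R M : Type*} [Semiring R]
    (op : MonoidAlgebra R M → MonoidAlgebra R M → MonoidAlgebra R M)
    (zero_left : ∀ y, op 0 y = 0) (zero_right : ∀ x, op x 0 = 0)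
    (add_left : ∀ x x' y, op (x + x') y = op x y + op x' y)
    (add_right : ∀ x y y', op x (y + y') = op x y + op x y')
    (single_assoc : ∀ u v w (a b c : R),
      op (op (.single u a) (.single v b)) (.single w c) =
        op (.single u a) (op (.single v b) (.single w c)))
    (x y z : MonoidAlgebra R M) : op (op x y) z = op x (op y z) := by
  induction x using MonoidAlgebra.induction_linear with
  | zero => simp only [zero_left]
  | add x x' hx hx' => rw [add_left, add_left, add_left, hx, hx']
  | single u a =>
  induction y using MonoidAlgebra.induction_linear with
  | zero => simp only [zero_left, zero_right]
  | add y y' hy hy' => simp only [add_left, add_right, hy, hy']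
  | single v b =>
  induction z using MonoidAlgebra.induction_linear with
  | zero => simp only [zero_right]
  | add z z' hz hz' => rw [add_right, add_right, add_right, hz, hz']
  | single w c => exact single_assoc u v w a b c

namespace FreeMonoid

variable {α : Type*} [LinearOrder α]

def SameMax (u v : FreeMonoid α) : Prop :=
  u.toList ≠ [] ∧ v.toList ≠ [] ∧ u.toList.maximum = v.toList.maximum

instance : DecidableRel (SameMax (α := α)) := fun _ _ => inferInstanceAs (Decidable (_ ∧ _))

theorem sameMax_iff_maximum_eq (u v : FreeMonoid α) :
    SameMax u v ↔ u.toList.maximum = v.toList.maximum ∧ u.toList.maximum ≠ ⊥ := by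
  simp only [SameMax, ne_eq, ← List.maximum_eq_bot]
  constructor
  · rintro ⟨hu, -, huv⟩; exact ⟨huv, hu⟩
  · rintro ⟨huv, hu⟩; exact ⟨hu, huv ▸ hu, huv⟩

theorem sameMax_and_sameMax_mul_iff (u v w : FreeMonoid α) :
    SameMax u v ∧ SameMax (u * v) w ↔ SameMax v w ∧ SameMax u (v * w) := by
  simp only [sameMax_iff_maximum_eq, toList_mul, List.maximum_append]
  grind

end FreeMonoid

section trCirc

variable {α : Type*} [LinearOrder α]

theorem trCirc_single_single (u v : FreeMonoid α) (a b : ℚ) :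
    trCirc (.single u a) (.single v b) =
      if u.SameMax v then MonoidAlgebra.single (u * v) (a * b) else 0 := by
  rw [trCirc, MonoidAlgebra.coeff_single, Finsupp.sum_single_index, MonoidAlgebra.coeff_single,
    Finsupp.sum_single_index]
  · rfl
  · simp
  · exact Finset.sum_eq_zero fun _ _ => by simp

theorem trCirc_zero_left (y : MonoidAlgebra ℚ (FreeMonoid α)) : trCirc 0 y = 0 := by
  simp [trCirc]

theorem trCirc_zero_right (x : MonoidAlgebra ℚ (FreeMonoid α)) : trCirc x 0 = 0 := by
  simp [trCirc]

theorem trCirc_add_left (x x' y : MonoidAlgebra ℚ (FreeMonoid α)) :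
    trCirc (x + x') y = trCirc x y + trCirc x' y := by
  unfold trCirc
  rw [MonoidAlgebra.coeff_add]
  refine Finsupp.sum_add_index' (fun _ => Finset.sum_eq_zero fun _ _ => by simp)
    fun _ _ _ => ?_
  rw [← Finsupp.sum_add]
  exact Finsupp.sum_congr fun _ _ => by split <;> simp [add_mul]

theorem trCirc_add_right (x y y' : MonoidAlgebra ℚ (FreeMonoid α)) :
    trCirc x (y + y') = trCirc x y + trCirc x y' := by
  unfold trCirc
  rw [← Finsupp.sum_add]
  refine Finsupp.sum_congr fun _ _ => ?_
  rw [MonoidAlgebra.coeff_add]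
  exact Finsupp.sum_add_index' (fun _ => by split <;> simp) fun _ _ _ => by split <;> simp [mul_add]

theorem trCirc_single_assoc (u v w : FreeMonoid α) (a b c : ℚ) :
    trCirc (trCirc (.single u a) (.single v b)) (.single w c) =
      trCirc (.single u a) (trCirc (.single v b) (.single w c)) := by
  rw [trCirc_single_single u, trCirc_single_single v, apply_ite (trCirc · (.single w c)),
    apply_ite (trCirc (.single u a)), trCirc_zero_left, trCirc_zero_right, trCirc_single_single,
    trCirc_single_single, ← ite_and, ← ite_and, mul_assoc, mul_assoc]
  exact if_congr (FreeMonoid.sameMax_and_sameMax_mul_iff u v w) rfl rfl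

end trCirc

/-- The operation `∘` of the dendriform trialgebra structure on
`MonoidAlgebra ℚ (FreeMonoid ℕ)` is associative. -/
theorem circ_assoc (x y z : MonoidAlgebra ℚ (FreeMonoid ℕ)) :
    trCirc (trCirc x y) z = trCirc x (trCirc y z) :=
  MonoidAlgebra.assoc_of_single_assoc trCirc trCirc_zero_left trCirc_zero_right trCirc_add_left
    trCirc_add_right trCirc_single_assoc x y z
end

section
/- Let F = MonoidAlgebra ℚ (FreeMonoid ℕ) with the three bilinear operations ≺, ∘, ≻ defined on basis words by Loday–Ronco's max-letter rule. Then for all x, y, z ∈ F, (x ≺ y) ≺ z = x ≺ (y ≺ z + y ∘ z + y ≻ z). -/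
/-! The three operations, and their sum `≺ + ∘ + ≻`, are concatenation of basis words restricted
by a condition on the pair of words; the sum is restricted only to nonempty words. A restricted
product satisfies an associativity law as soon as the conditions on its two sides agree on every
triple of words. For `(u ≺ v) ≺ w` and `u ≺ (v w)` both say that `u, v, w` are nonempty and
`max v, max w < max u`, since `max (u v) = max u` once `max v < max u`. -/

namespace MonoidAlgebra

variable {k M : Type*} [Semiring k]

section Mul

variable [Mul M] (p : M → M → Prop) [DecidableRel p]

noncomputable def restrictedMul (x y : MonoidAlgebra k M) : MonoidAlgebra k M :=
  x.coeff.sum fun u a => y.coeff.sum fun v b => if p u v then single (u * v) (a * b) else 0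

@[simp]
theorem restrictedMul_zero_left (y : MonoidAlgebra k M) : restrictedMul p 0 y = 0 :=
  Finsupp.sum_zero_index

@[simp]
theorem restrictedMul_zero_right (x : MonoidAlgebra k M) : restrictedMul p x 0 = 0 := by
  simp [restrictedMul]

theorem restrictedMul_add_left (x x' y : MonoidAlgebra k M) :
    restrictedMul p (x + x') y = restrictedMul p x y + restrictedMul p x' y := by
  unfold restrictedMul
  rw [coeff_add, Finsupp.sum_add_index']
  · intro u
    refine Finset.sum_eq_zero fun v _ => ?_
    simp
  · intro u a a'
    rw [← Finsupp.sum_add]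
    congr 1; funext v b
    split_ifs <;> simp [add_mul, single_add]

theorem restrictedMul_add_right (x y y' : MonoidAlgebra k M) :
    restrictedMul p x (y + y') = restrictedMul p x y + restrictedMul p x y' := by
  unfold restrictedMul
  rw [← Finsupp.sum_add]
  congr 1; funext u a
  rw [coeff_add, Finsupp.sum_add_index']
  · intro v; simp
  · intro v b b'
    split_ifs <;> simp [mul_add, single_add]

theorem restrictedMul_single_single (u v : M) (a b : k) :
    restrictedMul p (single u a) (single v b) = if p u v then single (u * v) (a * b) else 0 := by
  simp [restrictedMul, coeff_single]

theorem restrictedMul_add_restrictedMul {q r : M → M → Prop} [DecidableRel q] [DecidableRel r]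
    (hpq : ∀ u v, p u v → ¬ q u v) (hr : ∀ u v, r u v ↔ p u v ∨ q u v) (x y : MonoidAlgebra k M) :
    restrictedMul p x y + restrictedMul q x y = restrictedMul r x y := by
  unfold restrictedMul
  rw [← Finsupp.sum_add]
  congr 1; funext u a
  rw [← Finsupp.sum_add]
  congr 1; funext v b
  by_cases hp : p u v
  · simp [hp, hpq u v hp, (hr u v).2 (.inl hp)]
  · by_cases hq : q u v <;> simp [hp, hq, hr]

end Mul

theorem restrictedMul_assoc [Semigroup M] {p q r s : M → M → Prop}
    [DecidableRel p] [DecidableRel q] [DecidableRel r] [DecidableRel s]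
    (h : ∀ u v w, p u v ∧ q (u * v) w ↔ r v w ∧ s u (v * w)) (x y z : MonoidAlgebra k M) :
    restrictedMul q (restrictedMul p x y) z = restrictedMul s x (restrictedMul r y z) := by
  induction x using induction_linear with
  | zero => simp
  | add x x' hx hx' => simp only [restrictedMul_add_left, hx, hx']
  | single u a =>
  induction y using induction_linear with
  | zero => simp
  | add y y' hy hy' => simp only [restrictedMul_add_left, restrictedMul_add_right, hy, hy']
  | single v b =>
  induction z using induction_linear with
  | zero => simp
  | add z z' hz hz' => simp only [restrictedMul_add_right, hz, hz']
  | single w c =>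
  rw [restrictedMul_single_single, restrictedMul_single_single,
    apply_ite (restrictedMul q · (single w c)), apply_ite (restrictedMul s (single u a)),
    restrictedMul_zero_left, restrictedMul_zero_right, restrictedMul_single_single,
    restrictedMul_single_single, ← ite_and, ← ite_and, mul_assoc, mul_assoc]
  exact if_congr (h u v w) rfl rfl

end MonoidAlgebra

theorem List.maximum_lt_and_maximum_lt_append_iff {α : Type*} [LinearOrder α]
    (l₁ l₂ l₃ : List α) :
    ((l₁ ≠ [] ∧ l₂ ≠ [] ∧ l₂.maximum < l₁.maximum) ∧
      (l₁ ++ l₂ ≠ [] ∧ l₃ ≠ [] ∧ l₃.maximum < (l₁ ++ l₂).maximum)) ↔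
    ((l₂ ≠ [] ∧ l₃ ≠ []) ∧ (l₁ ≠ [] ∧ l₂ ++ l₃ ≠ [] ∧ (l₂ ++ l₃).maximum < l₁.maximum)) := by
  simp only [List.maximum_append, max_lt_iff, lt_max_iff, ne_eq, List.append_eq_nil_iff]
  constructor
  · rintro ⟨⟨h₁, h₂, h₂₁⟩, -, h₃, h₃₁ | h₃₂⟩
    · exact ⟨⟨h₂, h₃⟩, h₁, by tauto, h₂₁, h₃₁⟩
    · exact ⟨⟨h₂, h₃⟩, h₁, by tauto, h₂₁, h₃₂.trans h₂₁⟩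
  · rintro ⟨⟨h₂, h₃⟩, h₁, -, h₂₁, h₃₁⟩
    exact ⟨⟨h₁, h₂, h₂₁⟩, by tauto, h₃, .inl h₃₁⟩

section LodayRonco

open MonoidAlgebra

variable {α : Type*} [LinearOrder α]

theorem trPrec_eq_restrictedMul (x y : MonoidAlgebra ℚ (FreeMonoid α)) :
    trPrec x y = restrictedMul (fun u v : FreeMonoid α =>
      u.toList ≠ [] ∧ v.toList ≠ [] ∧ v.toList.maximum < u.toList.maximum) x y :=
  rfl

theorem trCirc_eq_restrictedMul (x y : MonoidAlgebra ℚ (FreeMonoid α)) :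
    trCirc x y = restrictedMul (fun u v : FreeMonoid α =>
      u.toList ≠ [] ∧ v.toList ≠ [] ∧ u.toList.maximum = v.toList.maximum) x y :=
  rfl

theorem trSucc_eq_restrictedMul (x y : MonoidAlgebra ℚ (FreeMonoid α)) :
    trSucc x y = restrictedMul (fun u v : FreeMonoid α =>
      u.toList ≠ [] ∧ v.toList ≠ [] ∧ u.toList.maximum < v.toList.maximum) x y :=
  rfl

theorem trPrec_add_trCirc_add_trSucc (x y : MonoidAlgebra ℚ (FreeMonoid α)) :
    trPrec x y + trCirc x y + trSucc x y =
      restrictedMul (fun u v : FreeMonoid α => u.toList ≠ [] ∧ v.toList ≠ []) x y := by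
  rw [trPrec_eq_restrictedMul, trCirc_eq_restrictedMul, trSucc_eq_restrictedMul,
    restrictedMul_add_restrictedMul _ (r := fun u v : FreeMonoid α =>
      u.toList ≠ [] ∧ v.toList ≠ [] ∧ v.toList.maximum ≤ u.toList.maximum)
      (fun _ _ h h' => h.2.2.ne' h'.2.2) (fun _ _ => by grind)]
  exact restrictedMul_add_restrictedMul _ (fun _ _ h h' => h.2.2.not_gt h'.2.2)
    (fun _ _ => by grind) x y

end LodayRonco

/-- Dendriform trialgebra axiom: `(x ≺ y) ≺ z = x ≺ (y ≺ z + y ∘ z + y ≻ z)`. -/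
theorem prec_prec (x y z : MonoidAlgebra ℚ (FreeMonoid ℕ)) :
    trPrec (trPrec x y) z = trPrec x (trPrec y z + trCirc y z + trSucc y z) := by
  rw [trPrec_add_trCirc_add_trSucc, trPrec_eq_restrictedMul, trPrec_eq_restrictedMul,
    trPrec_eq_restrictedMul]
  exact MonoidAlgebra.restrictedMul_assoc
    (fun u v w => List.maximum_lt_and_maximum_lt_append_iff u.toList v.toList w.toList) x y z
end

section
/- Let F = MonoidAlgebra ℚ (FreeMonoid ℕ) with the three bilinear operations ≺, ∘, ≻ defined on basis words by Loday–Ronco's max-letter rule. Then for all x, y, z ∈ F, (x ≻ y) ≺ z = x ≻ (y ≺ z). -/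
/-!
Each of `≻`, `≺` keeps the product `uv` of two basis words or kills it according to a condition
on `(u, v)`. An identity `(x ⋆ y) ⋆' z = x ⋆ (y ⋆' z)` between two such operations therefore holds
as soon as, for all words, the conditions for `(u ⋆ v) ⋆' w` and for `u ⋆ (v ⋆' w)` to survive
agree. Since `max (uv) = max (max u, max v)`, both conditions for `(u ≻ v) ≺ w` and `u ≻ (v ≺ w)`
say that `u, v, w` are nonempty and `max v` exceeds `max u` and `max w`.
-/

namespace MonoidAlgebra

variable {k M : Type*} [Semiring k]

noncomputable def guardedMul [Mul M] (P : M → M → Prop) [DecidableRel P]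
    (x y : MonoidAlgebra k M) : MonoidAlgebra k M :=
  x.coeff.sum fun u a => y.coeff.sum fun v b => if P u v then single (u * v) (a * b) else 0

section Bilinear

variable [Mul M] (P : M → M → Prop) [DecidableRel P]

@[simp]
lemma guardedMul_zero_left (y : MonoidAlgebra k M) : guardedMul P 0 y = 0 := by
  simp [guardedMul]

@[simp]
lemma guardedMul_zero_right (x : MonoidAlgebra k M) : guardedMul P x 0 = 0 := by
  simp [guardedMul]

lemma guardedMul_add_left (x x' y : MonoidAlgebra k M) :
    guardedMul P (x + x') y = guardedMul P x y + guardedMul P x' y := by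
  refine Finsupp.sum_add_index' (by simp) fun u a a' => ?_
  rw [← Finsupp.sum_add]
  refine Finsupp.sum_congr fun v _ => ?_
  split_ifs <;> simp [add_mul, single_add]

lemma guardedMul_add_right (x y y' : MonoidAlgebra k M) :
    guardedMul P x (y + y') = guardedMul P x y + guardedMul P x y' := by
  rw [guardedMul, guardedMul, guardedMul, ← Finsupp.sum_add]
  refine Finsupp.sum_congr fun u _ => Finsupp.sum_add_index' (by simp) fun v b b' => ?_
  split_ifs <;> simp [mul_add, single_add]

lemma guardedMul_single_single (u v : M) (a b : k) :
    guardedMul P (single u a) (single v b) = if P u v then single (u * v) (a * b) else 0 := by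
  simp only [guardedMul, coeff_single]
  rw [Finsupp.sum_single_index, Finsupp.sum_single_index] <;> simp

end Bilinear

theorem guardedMul_assoc_of_iff [Semigroup M] {P Q : M → M → Prop} [DecidableRel P]
    [DecidableRel Q] (h : ∀ u v w, P u v ∧ Q (u * v) w ↔ Q v w ∧ P u (v * w))
    (x y z : MonoidAlgebra k M) :
    guardedMul Q (guardedMul P x y) z = guardedMul P x (guardedMul Q y z) := by
  induction x using induction_linear with
  | zero => simp
  | add x x' hx hx' => rw [guardedMul_add_left, guardedMul_add_left, hx, hx', guardedMul_add_left]
  | single u a =>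
  induction y using induction_linear with
  | zero => simp
  | add y y' hy hy' =>
    rw [guardedMul_add_right, guardedMul_add_left, hy, hy', guardedMul_add_left,
      guardedMul_add_right]
  | single v b =>
  induction z using induction_linear with
  | zero => simp
  | add z z' hz hz' =>
    rw [guardedMul_add_right, hz, hz', guardedMul_add_right, guardedMul_add_right]
  | single w c =>
    simp only [guardedMul_single_single, apply_ite (guardedMul Q · (single w c)),
      apply_ite (guardedMul P (single u a)), guardedMul_zero_left, guardedMul_zero_right,
      ← ite_and, h u v w, mul_assoc]

end MonoidAlgebra

section LodayRonco

open MonoidAlgebra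

variable {α : Type*} [LinearOrder α]

lemma trSucc_eq_guardedMul (x y : MonoidAlgebra ℚ (FreeMonoid α)) :
    trSucc x y = guardedMul (fun u v => u.toList ≠ [] ∧ v.toList ≠ [] ∧
      u.toList.maximum < v.toList.maximum) x y :=
  rfl

lemma trPrec_eq_guardedMul (x y : MonoidAlgebra ℚ (FreeMonoid α)) :
    trPrec x y = guardedMul (fun u v => u.toList ≠ [] ∧ v.toList ≠ [] ∧
      v.toList.maximum < u.toList.maximum) x y :=
  rfl

lemma succ_prec_word_iff (u v w : FreeMonoid α) :
    ((u.toList ≠ [] ∧ v.toList ≠ [] ∧ u.toList.maximum < v.toList.maximum) ∧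
      ((u * v).toList ≠ [] ∧ w.toList ≠ [] ∧ w.toList.maximum < (u * v).toList.maximum)) ↔
    ((v.toList ≠ [] ∧ w.toList ≠ [] ∧ w.toList.maximum < v.toList.maximum) ∧
      (u.toList ≠ [] ∧ (v * w).toList ≠ [] ∧ u.toList.maximum < (v * w).toList.maximum)) := by
  simp only [FreeMonoid.toList_mul, List.maximum_append, ne_eq, List.append_eq_nil_iff]
  constructor
  · rintro ⟨⟨hu, hv, huv⟩, -, hw, hwuv⟩
    rw [max_eq_right huv.le] at hwuv
    exact ⟨⟨hv, hw, hwuv⟩, hu, by simp [hv], lt_max_of_lt_left huv⟩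
  · rintro ⟨⟨hv, hw, hwv⟩, hu, -, huvw⟩
    rw [max_eq_left hwv.le] at huvw
    exact ⟨⟨hu, hv, huvw⟩, by simp [hu], hw, lt_max_of_lt_right hwv⟩

end LodayRonco

/-- Dendriform trialgebra axiom: `(x ≻ y) ≺ z = x ≻ (y ≺ z)`. -/
theorem succ_prec (x y z : MonoidAlgebra ℚ (FreeMonoid ℕ)) :
    trPrec (trSucc x y) z = trSucc x (trPrec y z) := by
  simp only [trSucc_eq_guardedMul, trPrec_eq_guardedMul]
  exact MonoidAlgebra.guardedMul_assoc_of_iff succ_prec_word_iff x y z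
end

section
/- Let F = MonoidAlgebra ℚ (FreeMonoid ℕ) with the three bilinear operations ≺, ∘, ≻ defined on basis words by Loday–Ronco's max-letter rule. Then for all x, y, z ∈ F, (x ≻ y) ∘ z = x ≻ (y ∘ z). -/
/-
Each operation keeps the concatenation `uv` of two basis words only when a condition on
`(u, v)` holds. Two such conditioned products associate as soon as, for every triple of words,
the condition for `(uv)w` is equivalent to that for `u(vw)`; for `≻` followed by `∘` both say
that `u, v, w` are nonempty and `max u < max v = max w`, because `max (uv) = max (max u) (max v)`.
-/

namespace MonoidAlgebra

variable {k M : Type*} [Semiring k]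

noncomputable def condMul [Mul M] (P : M → M → Prop) [DecidableRel P] (x y : k[M]) : k[M] :=
  x.coeff.sum fun u a => y.coeff.sum fun v b => if P u v then single (u * v) (a * b) else 0

section condMul

variable [Mul M] (P : M → M → Prop) [DecidableRel P]

@[simp]
lemma condMul_zero_left (y : k[M]) : condMul P 0 y = 0 := by
  simp [condMul]

@[simp]
lemma condMul_zero_right (x : k[M]) : condMul P x 0 = 0 := by
  simp [condMul]

lemma condMul_add_left (x x' y : k[M]) :
    condMul P (x + x') y = condMul P x y + condMul P x' y := by
  refine Finsupp.sum_add_index' (fun u => by simp) fun u a a' => ?_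
  rw [← Finsupp.sum_add]
  refine Finsupp.sum_congr fun v _ => ?_
  split_ifs <;> simp [add_mul]

lemma condMul_add_right (x y y' : k[M]) :
    condMul P x (y + y') = condMul P x y + condMul P x y' := by
  rw [condMul, condMul, condMul, ← Finsupp.sum_add]
  refine Finsupp.sum_congr fun u _ => Finsupp.sum_add_index' (fun v => by simp) fun v b b' => ?_
  split_ifs <;> simp [mul_add]

lemma condMul_single_single (u v : M) (a b : k) :
    condMul P (single u a) (single v b) = if P u v then single (u * v) (a * b) else 0 := by
  by_cases h : P u v <;> simp [condMul, h]

end condMul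

theorem condMul_assoc_of_iff [Semigroup M] {P Q R S : M → M → Prop}
    [DecidableRel P] [DecidableRel Q] [DecidableRel R] [DecidableRel S]
    (h : ∀ u v w, P u v ∧ Q (u * v) w ↔ R v w ∧ S u (v * w)) (x y z : k[M]) :
    condMul Q (condMul P x y) z = condMul S x (condMul R y z) := by
  induction x using induction_linear with
  | zero => simp
  | add x x' hx hx' => rw [condMul_add_left, condMul_add_left, condMul_add_left, hx, hx']
  | single u a =>
    induction y using induction_linear with
    | zero => simp
    | add y y' hy hy' =>
      rw [condMul_add_right, condMul_add_left, condMul_add_left, condMul_add_right, hy, hy']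
    | single v b =>
      induction z using induction_linear with
      | zero => simp
      | add z z' hz hz' =>
        rw [condMul_add_right, condMul_add_right, condMul_add_right, hz, hz']
      | single w c =>
        have lhs : condMul Q (condMul P (single u a) (single v b)) (single w c) =
            if P u v ∧ Q (u * v) w then single (u * v * w) (a * b * c) else 0 := by
          rw [condMul_single_single]
          by_cases huv : P u v <;> simp [huv, condMul_single_single]
        have rhs : condMul S (single u a) (condMul R (single v b) (single w c)) =
            if R v w ∧ S u (v * w) then single (u * (v * w)) (a * (b * c)) else 0 := by
          rw [condMul_single_single]
          by_cases hvw : R v w <;> simp [hvw, condMul_single_single]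
        rw [lhs, rhs, mul_assoc, mul_assoc]
        exact if_congr (h u v w) rfl rfl

end MonoidAlgebra

namespace FreeMonoid

variable {α : Type*} [LinearOrder α]

def SuccRel (u v : FreeMonoid α) : Prop :=
  u.toList ≠ [] ∧ v.toList ≠ [] ∧ u.toList.maximum < v.toList.maximum

def CircRel (u v : FreeMonoid α) : Prop :=
  u.toList ≠ [] ∧ v.toList ≠ [] ∧ u.toList.maximum = v.toList.maximum

instance : DecidableRel (SuccRel (α := α)) := fun _ _ => instDecidableAnd

instance : DecidableRel (CircRel (α := α)) := fun _ _ => instDecidableAnd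

lemma succRel_and_circRel_mul_iff (u v w : FreeMonoid α) :
    SuccRel u v ∧ CircRel (u * v) w ↔ CircRel v w ∧ SuccRel u (v * w) := by
  simp only [SuccRel, CircRel, toList_mul, List.maximum_append, ne_eq, List.append_eq_nil_iff]
  constructor
  · rintro ⟨⟨hu, hv, hlt⟩, -, hw, hmax⟩
    rw [max_eq_right hlt.le] at hmax
    exact ⟨⟨hv, hw, hmax⟩, hu, by tauto, by rwa [← hmax, max_self]⟩
  · rintro ⟨⟨hv, hw, hmax⟩, hu, -, hlt⟩
    rw [← hmax, max_self] at hlt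
    exact ⟨⟨hu, hv, hlt⟩, by tauto, hw, by rw [max_eq_right hlt.le, hmax]⟩

end FreeMonoid

open MonoidAlgebra FreeMonoid

lemma trSucc_eq_condMul {α : Type*} [LinearOrder α] (x y : MonoidAlgebra ℚ (FreeMonoid α)) :
    trSucc x y = condMul SuccRel x y := rfl

lemma trCirc_eq_condMul {α : Type*} [LinearOrder α] (x y : MonoidAlgebra ℚ (FreeMonoid α)) :
    trCirc x y = condMul CircRel x y := rfl

/-- Dendriform trialgebra axiom: `(x ≻ y) ∘ z = x ≻ (y ∘ z)`. -/
theorem succ_circ (x y z : MonoidAlgebra ℚ (FreeMonoid ℕ)) :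
    trCirc (trSucc x y) z = trSucc x (trCirc y z) := by
  simp only [trSucc_eq_condMul, trCirc_eq_condMul]
  exact condMul_assoc_of_iff succRel_and_circRel_mul_iff x y z
end

section
/- Fix N ≥ 1 and work in MonoidAlgebra ℚ (FreeMonoid (Fin N)). The family (M_u), indexed by all packed words u whose greatest letter is at most N, is linearly independent. -/
/-!
Reading a packed word `u` with letters in `{1, …, N}` as a word over `Fin N` gives a word whose
packing is `u` itself, so it occurs in `M_u` with coefficient `1` and in no other `M_v`. Taking
coefficients at these words is thus a family of linear forms dual to `(M_u)`.
-/

/-- The rank of the letter `x` in the word `w`: one plus the number of distinct letters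
of `w` smaller than `x`. -/
def rank (w : List ℕ) (x : ℕ) : ℕ := ((w.filter (· < x)).dedup).length + 1

/-- The packed word of a word `w`: if the distinct letters occurring in `w` are
`b₁ < b₂ < … < b_k`, each occurrence of `b_j` is replaced by `j`. -/
def pack (w : List ℕ) : List ℕ := w.map (rank w)

/-- For a packed word `u`, the element `M_u` of `MonoidAlgebra ℚ (FreeMonoid (Fin N))`:
the sum of all words `w` over the alphabet `Fin N` (identified with `{1 < 2 < … < N}`)
whose packed word is `u`. -/
noncomputable def Mword (N : ℕ) (u : List ℕ) : MonoidAlgebra ℚ (FreeMonoid (Fin N)) :=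
  ∑ f : Fin u.length → Fin N,
    if pack ((List.ofFn f).map (fun i => (i : ℕ) + 1)) = u
    then MonoidAlgebra.single (FreeMonoid.ofList (List.ofFn f)) (1 : ℚ) else 0

theorem coeff_sum_single_ofFn {α R : Type*} [Fintype α] [Semiring R] (n : ℕ)
    (P : List α → Prop) [DecidablePred P] (l : List α) :
    (∑ f : Fin n → α, if P (List.ofFn f)
      then MonoidAlgebra.single (FreeMonoid.ofList (List.ofFn f)) (1 : R) else 0).coeff
        (FreeMonoid.ofList l) = if P l ∧ l.length = n then 1 else 0 := by
  classical
  simp only [MonoidAlgebra.coeff_sum, Finsupp.finsetSum_apply,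
    apply_ite (fun x : MonoidAlgebra R (FreeMonoid α) => x.coeff (FreeMonoid.ofList l)),
    MonoidAlgebra.coeff_single, MonoidAlgebra.coeff_zero, Finsupp.zero_apply,
    Finsupp.single_apply, FreeMonoid.ofList.injective.eq_iff]
  by_cases hl : l.length = n
  · obtain ⟨g, rfl⟩ : ∃ g : Fin n → α, List.ofFn g = l :=
      ⟨fun i => l.get (i.cast hl.symm), List.ext_getElem (by simp [hl]) (by simp)⟩
    rw [Finset.sum_eq_single_of_mem g (Finset.mem_univ g) (fun f _ hf => by simp [hf])]
    simp
  · have hne : ∀ f : Fin n → α, List.ofFn f ≠ l := fun f hf => hl (by simp [← hf])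
    simp [hne, hl]

theorem length_pack (w : List ℕ) : (pack w).length = w.length := List.length_map _

theorem one_le_of_mem_pack {w : List ℕ} {x : ℕ} (hx : x ∈ pack w) : 1 ≤ x := by
  obtain ⟨y, -, rfl⟩ := List.mem_map.mp hx
  exact Nat.le_add_left 1 _

-- In `Mword`, `(List.ofFn f).map (fun i => (i : ℕ) + 1)` elaborates as a map over `ℕ` of the
-- list coerced to `List ℕ`, i.e. the left-hand side below.
theorem map_coe_add_one {N : ℕ} (l : List (Fin N)) :
    (l : List ℕ).map (· + 1) = l.map (fun i : Fin N => (i : ℕ) + 1) := by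
  induction l <;> simp_all

theorem coeff_Mword (N : ℕ) (v : List ℕ) (l : List (Fin N)) :
    (Mword N v).coeff (FreeMonoid.ofList l) =
      if pack (l.map (fun i : Fin N => (i : ℕ) + 1)) = v then 1 else 0 := by
  rw [Mword, coeff_sum_single_ofFn
    (P := fun w : List (Fin N) => pack (w.map (fun i => (i : ℕ) + 1)) = v), map_coe_add_one]
  refine if_congr ⟨And.left, fun h => ⟨h, ?_⟩⟩ rfl rfl
  rw [← h, length_pack, List.length_map]

theorem exists_map_val_add_one_eq {N : ℕ} {u : List ℕ} (hu : ∀ x ∈ u, 1 ≤ x ∧ x ≤ N) :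
    ∃ l : List (Fin N), l.map (fun i : Fin N => (i : ℕ) + 1) = u := by
  rw [← Set.mem_range, Set.range_list_map]
  intro x hx
  exact ⟨⟨x - 1, by have := hu x hx; omega⟩, by have := hu x hx; simp only; omega⟩

theorem Mword_linearIndependent_general (N : ℕ) :
    LinearIndependent ℚ
      (fun u : {u : List ℕ // pack u = u ∧ ∀ x ∈ u, x ≤ N} => Mword N u.val) := by
  have hletters (u : {u : List ℕ // pack u = u ∧ ∀ x ∈ u, x ≤ N}) :
      ∀ x ∈ u.val, 1 ≤ x ∧ x ≤ N :=
    fun x hx => ⟨one_le_of_mem_pack (u.2.1.symm ▸ hx), u.2.2 x hx⟩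
  choose word hword using fun u => exists_map_val_add_one_eq (hletters u)
  let coord u := (MonoidAlgebra.basis (FreeMonoid (Fin N)) ℚ).coord (FreeMonoid.ofList (word u))
  have hcoord (u v) : coord u (Mword N v.val) = if u = v then 1 else 0 := by
    change (Mword N v.val).coeff _ = _
    rw [coeff_Mword, hword, u.2.1]
    exact if_congr Subtype.ext_iff.symm rfl rfl
  exact .of_pairwise_dual_eq_zero_one _ coord (fun u v huv => by simp [hcoord, huv])
    (fun u => by simp [hcoord])

/-- The family `(M_u)`, indexed by the packed words `u` whose greatest letter is at most
`N`, is linearly independent in `MonoidAlgebra ℚ (FreeMonoid (Fin N))`. -/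
theorem Mword_linearIndependent (N : ℕ) (hN : 1 ≤ N) :
    LinearIndependent ℚ
      (fun u : {u : List ℕ // pack u = u ∧ ∀ x ∈ u, x ≤ N} => Mword N u.val) :=
  Mword_linearIndependent_general N
end

section
/- Fix N ≥ 1 and work in MonoidAlgebra ℚ (FreeMonoid (Fin N)). For any two packed words u and v, the product satisfies M_u * M_v = Σ_w M_w, where the sum ranges over all packed words w of length |u| + |v| such that the prefix of w of length |u| packs to u and the suffix of w of length |v| packs to v. In particular the linear span of the M_u is a subalgebra (the algebra NCQSym of noncommutative quasi-symmetric-type monomial functions). -/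
/-- The (finite) set of all packed words of length `n`; a packed word of length `n`
has all its letters in `{1, …, n}`. -/
noncomputable def packedWords (n : ℕ) : Finset (List ℕ) :=
  ((Finset.univ : Finset (Fin n → Fin (n + 1))).image
    (fun f => (List.ofFn f).map (fun i : Fin (n + 1) => (i : ℕ)))).filter (fun w => pack w = w)

/-!
Both sides are sums, with coefficient one, of words of length `|u| + |v|`: a product of two words
is their concatenation, and every word splits uniquely into its prefix of length `|u|` and its
suffix of length `|v|`. It remains to match the conditions on a word `x`. Packing is invariant
under strictly increasing relabellings of the letters, and `pack x` is such a relabelling of `x`,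
so the prefix and suffix of `pack x` pack like those of `x`; hence `pack x` lies in the indexing
set exactly when the prefix of `x` packs to `u` and its suffix to `v`.
-/

open Finset

lemma rank_eq_card (w : List ℕ) (x : ℕ) : rank w x = #{y ∈ w.toFinset | y < x} + 1 := by
  rw [rank, ← List.card_toFinset, List.toFinset_filter]
  simp

lemma rank_strictMonoOn (w : List ℕ) : StrictMonoOn (rank w) {x | x ∈ w} := by
  intro a ha b _ hab
  simp only [rank_eq_card, add_lt_add_iff_right]
  refine card_lt_card ⟨monotone_filter_right _ fun y _ hy => hy.trans hab, fun hsub => ?_⟩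
  simpa using hsub (mem_filter.2 ⟨List.mem_toFinset.2 ha, hab⟩)

lemma pack_map_of_strictMonoOn {w : List ℕ} {g : ℕ → ℕ} (hg : StrictMonoOn g {x | x ∈ w}) :
    pack (w.map g) = pack w := by
  rw [pack, pack, List.map_map]
  refine List.map_congr_left fun a ha => ?_
  have hfilter : {y ∈ w.toFinset | g y < g a} = {y ∈ w.toFinset | y < a} :=
    filter_congr fun y hy => hg.lt_iff_lt (List.mem_toFinset.1 hy) ha
  have himage : (w.map g).toFinset = w.toFinset.image g := by ext; simp
  rw [Function.comp_apply, rank_eq_card, rank_eq_card, himage, filter_image, hfilter,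
    card_image_of_injOn (hg.injOn.mono fun y hy => List.mem_toFinset.1 (mem_filter.1 hy).1)]

lemma pack_map_rank_of_subset {w x : List ℕ} (h : w ⊆ x) : pack (w.map (rank x)) = pack w :=
  pack_map_of_strictMonoOn ((rank_strictMonoOn x).mono fun _ ha => h ha)

lemma pack_pack (w : List ℕ) : pack (pack w) = pack w :=
  pack_map_rank_of_subset (List.Subset.refl w)

lemma pack_take_pack (w : List ℕ) (m : ℕ) : pack ((pack w).take m) = pack (w.take m) := by
  rw [pack.eq_1 w, ← List.map_take]
  exact pack_map_rank_of_subset (List.take_subset m w)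

lemma pack_drop_pack (w : List ℕ) (m : ℕ) : pack ((pack w).drop m) = pack (w.drop m) := by
  rw [pack.eq_1 w, ← List.map_drop]
  exact pack_map_rank_of_subset (List.drop_subset m w)

lemma rank_le_length {w : List ℕ} {a : ℕ} (ha : a ∈ w) : rank w a ≤ w.length := by
  have hlt : #{y ∈ w.toFinset | y < a} < #w.toFinset :=
    card_lt_card ⟨filter_subset _ _, fun hsub => by simpa using hsub (List.mem_toFinset.2 ha)⟩
  have := w.toFinset_card_le
  rw [rank_eq_card]
  omega

lemma pack_mem_packedWords (w : List ℕ) : pack w ∈ packedWords w.length := by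
  have hlen : (pack w).length = w.length := List.length_map _
  have hlt (i : Fin (pack w).length) : (pack w)[i] < w.length + 1 := by
    obtain ⟨a, ha, h⟩ := List.mem_map.1 (List.getElem_mem i.2)
    exact h ▸ Nat.lt_succ_of_le (rank_le_length ha)
  refine mem_filter.2 ⟨mem_image.2 ⟨fun i => ⟨_, hlt (i.cast hlen.symm)⟩, mem_univ _, ?_⟩,
    pack_pack w⟩
  rw [List.map_ofFn]
  exact (List.ofFn_congr hlen.symm _).trans (List.ofFn_getElem (xs := pack w))

lemma length_of_mem_packedWords {n : ℕ} {w : List ℕ} (hw : w ∈ packedWords n) : w.length = n := by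
  obtain ⟨f, -, rfl⟩ := mem_image.1 (mem_filter.1 hw).1
  simp

noncomputable def sumWords (N n : ℕ) (P : List ℕ → Prop) [DecidablePred P] :
    MonoidAlgebra ℚ (FreeMonoid (Fin N)) :=
  ∑ f : Fin n → Fin N,
    if P ((List.ofFn f).map fun i : Fin N => (i : ℕ) + 1)
    then MonoidAlgebra.single (FreeMonoid.ofList (List.ofFn f)) 1 else 0

lemma Mword_eq_sumWords (N : ℕ) (u : List ℕ) : Mword N u = sumWords N u.length (pack · = u) := by
  -- `Mword` reaches `List ℕ` through the `List` monad lift `List.ofFn f >>= pure ∘ Fin.val`.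
  refine Fintype.sum_congr _ _ fun f => ?_
  change ite (pack (((List.ofFn f).flatMap (pure ∘ Fin.val)).map _) = u) _ _ = _
  rw [List.flatMap_pure_eq_map, List.map_map]
  rfl

lemma Mword_eq_sumWords_of_length {N n : ℕ} {u : List ℕ} (h : u.length = n) :
    Mword N u = sumWords N n (pack · = u) :=
  h ▸ Mword_eq_sumWords N u

lemma sumWords_congr {N n : ℕ} {P Q : List ℕ → Prop} [DecidablePred P] [DecidablePred Q]
    (h : ∀ w : List ℕ, w.length = n → (P w ↔ Q w)) : sumWords N n P = sumWords N n Q :=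
  Fintype.sum_congr _ _ fun f => if_congr (h _ (by simp)) rfl rfl

lemma sumWords_mul_sumWords (N m n : ℕ) (P Q : List ℕ → Prop) [DecidablePred P] [DecidablePred Q] :
    sumWords N m P * sumWords N n Q =
      sumWords N (m + n) (fun w => P (w.take m) ∧ Q (w.drop m)) := by
  rw [sumWords, sumWords, sum_mul_sum, ← Fintype.sum_prod_type', sumWords,
    ← (Fin.appendEquiv m n).sum_comp]
  refine Fintype.sum_congr _ _ fun p => ?_
  rw [show Fin.appendEquiv m n p = Fin.append p.1 p.2 from rfl]
  simp only [List.ofFn_fin_append, List.map_append, ite_zero_mul_ite_zero,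
    MonoidAlgebra.single_mul_single, FreeMonoid.ofList_append, one_mul]
  rw [List.take_left' (by simp), List.drop_left' (by simp)]

lemma sum_sumWords_eq_sumWords_mem (N n : ℕ) (g : List ℕ → List ℕ) (S : Finset (List ℕ)) :
    ∑ w ∈ S, sumWords N n (g · = w) = sumWords N n (g · ∈ S) := by
  simp only [sumWords]
  rw [sum_comm]
  exact Fintype.sum_congr _ _ fun f => sum_ite_eq S _ _

lemma pack_mem_filter_packedWords_iff {w : List ℕ} {m n : ℕ} (hw : w.length = m + n)
    (u v : List ℕ) :
    pack w ∈ (packedWords (m + n)).filter (fun p => pack (p.take m) = u ∧ pack (p.drop m) = v) ↔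
      pack (w.take m) = u ∧ pack (w.drop m) = v := by
  rw [mem_filter, pack_take_pack, pack_drop_pack, ← hw]
  exact and_iff_right (pack_mem_packedWords w)

theorem Mword_mul_general (N : ℕ) (u v : List ℕ) :
    Mword N u * Mword N v =
      ∑ w ∈ (packedWords (u.length + v.length)).filter
        (fun w => pack (w.take u.length) = u ∧ pack (w.drop u.length) = v),
        Mword N w := by
  rw [Mword_eq_sumWords, Mword_eq_sumWords, sumWords_mul_sumWords,
    sum_congr rfl fun w hw =>
      Mword_eq_sumWords_of_length (length_of_mem_packedWords (mem_filter.1 hw).1),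
    sum_sumWords_eq_sumWords_mem]
  exact sumWords_congr fun w hw => (pack_mem_filter_packedWords_iff hw u v).symm

/-- Product formula for `NCQSym`: for packed words `u` and `v`,
`M_u * M_v = Σ_w M_w`, where `w` ranges over all packed words of length `|u| + |v|`
whose prefix of length `|u|` packs to `u` and whose suffix of length `|v|` packs to `v`.
In particular the span of the `M_u` is a subalgebra. -/
theorem Mword_mul (N : ℕ) (hN : 1 ≤ N) (u v : List ℕ) (hu : pack u = u) (hv : pack v = v) :
    Mword N u * Mword N v =
      ∑ w ∈ (packedWords (u.length + v.length)).filter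
        (fun w => pack (w.take u.length) = u ∧ pack (w.drop u.length) = v),
        Mword N w :=
  Mword_mul_general N u v
end

section
/- For every word w over the positive integers, the plane tree 𝒯(w) depends only on the packed word of w: 𝒯(w) = 𝒯(pack(w)). -/
/-- A plane tree: a node carrying an ordered (possibly empty) list of subtrees.
A leaf is `node []`. -/
inductive PlaneTree where
  | node : List PlaneTree → PlaneTree

/-- Auxiliary, fuel-indexed version of the map `w ↦ 𝒯(w)` from words to plane trees.
If `w` is nonempty with greatest letter `m`, writing `w = v₀ m v₁ m ⋯ m v_k`
(splitting at the occurrences of `m`), the tree is obtained by grafting the trees of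
`v₀, v₁, …, v_k` (in this order) on a common root; the empty word gives a leaf.
The fuel argument (any value `≥ w.length` gives the correct answer, since each factor
`vᵢ` is strictly shorter than `w`) makes the recursion structural. -/
def treeOfAux : ℕ → List ℕ → PlaneTree
  | 0, _ => .node []
  | _ + 1, [] => .node []
  | n + 1, a :: l =>
      .node (((a :: l).splitOn ((a :: l).foldr max 0)).map (treeOfAux n))

/-- The plane tree `𝒯(w)` associated to a word `w` over the natural numbers:
`𝒯(ε)` is a leaf, and if `w` is nonempty with greatest letter `m` occurring exactly `k`
times, writing `w = v₀ m v₁ m ⋯ m v_k`, then `𝒯(w) = node [𝒯(v₀), 𝒯(v₁), …, 𝒯(v_k)]`. -/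
def treeOf (w : List ℕ) : PlaneTree := treeOfAux w.length w

/-! A map `f` strictly increasing on the letters of `w` sends the greatest letter `m` of `w` to
the greatest letter of `f(w)`, and no other letter to `f m`; so splitting `f(w)` at its maximum
is the image under `f` of splitting `w` at `m`, and induction on the length shows
`𝒯(f(w)) = 𝒯(w)`. The rank map `x ↦ rank w x` is such a map. -/

namespace List

variable {α β : Type*}

theorem sublist_of_mem_splitOnPPrepend {p : α → Bool} {l acc v : List α}
    (hv : v ∈ l.splitOnPPrepend p acc) : v <+ acc.reverse ++ l := by
  induction l generalizing acc with
  | nil => simp_all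
  | cons a t ih =>
    by_cases ha : p a
    · rw [splitOnPPrepend_cons_pos ha, mem_cons] at hv
      rcases hv with rfl | hv
      · exact sublist_append_left _ _
      · exact (ih hv).trans (by simp)
    · rw [splitOnPPrepend_cons_neg (by simpa using ha)] at hv
      simpa using ih hv

theorem sublist_of_mem_splitOnP {p : α → Bool} {l v : List α} (hv : v ∈ l.splitOnP p) :
    v <+ l := by
  simpa using sublist_of_mem_splitOnPPrepend hv

theorem eq_false_of_mem_splitOnPPrepend {p : α → Bool} {l acc v : List α}
    (hacc : ∀ x ∈ acc, p x = false) (hv : v ∈ l.splitOnPPrepend p acc) :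
    ∀ x ∈ v, p x = false := by
  induction l generalizing acc with
  | nil => simp_all
  | cons a t ih =>
    by_cases ha : p a
    · rw [splitOnPPrepend_cons_pos ha, mem_cons] at hv
      rcases hv with rfl | hv
      · simpa using hacc
      · exact ih (by simp) hv
    · rw [splitOnPPrepend_cons_neg (by simpa using ha)] at hv
      exact ih (by simp_all) hv

theorem eq_false_of_mem_splitOnP {p : α → Bool} {l v : List α} (hv : v ∈ l.splitOnP p) :
    ∀ x ∈ v, p x = false :=
  eq_false_of_mem_splitOnPPrepend (by simp) hv

theorem length_lt_of_mem_splitOnP {p : α → Bool} {l v : List α} {a : α} (ha : a ∈ l)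
    (hpa : p a) (hv : v ∈ l.splitOnP p) : v.length < l.length := by
  have hsub := sublist_of_mem_splitOnP hv
  refine lt_of_le_of_ne hsub.length_le fun hlen => ?_
  have := eq_false_of_mem_splitOnP hv a (hsub.eq_of_length hlen ▸ ha)
  simp_all

theorem splitOnPPrepend_map (f : α → β) (q : β → Bool) (l acc : List α) :
    (l.map f).splitOnPPrepend q (acc.map f) =
      (l.splitOnPPrepend (q ∘ f) acc).map (map f) := by
  induction l generalizing acc with
  | nil => simp
  | cons a t ih =>
    by_cases ha : q (f a)
    · simpa [splitOnPPrepend_cons_pos, ha] using ih []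
    · simp [splitOnPPrepend_cons_neg, ha, ← ih]

theorem splitOnP_map (f : α → β) (q : β → Bool) (l : List α) :
    (l.map f).splitOnP q = (l.splitOnP (q ∘ f)).map (map f) :=
  splitOnPPrepend_map f q l []

theorem splitOnPPrepend_congr {p q : α → Bool} {l : List α} (h : ∀ x ∈ l, p x = q x)
    (acc : List α) : l.splitOnPPrepend p acc = l.splitOnPPrepend q acc := by
  induction l generalizing acc with
  | nil => simp
  | cons a t ih =>
    simp only [mem_cons, forall_eq_or_imp] at h
    simp only [splitOnPPrepend_cons_eq_if, h.1, splitOnP_eq_splitOnPPrepend, ih h.2]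

theorem splitOnP_congr {p q : α → Bool} {l : List α} (h : ∀ x ∈ l, p x = q x) :
    l.splitOnP p = l.splitOnP q :=
  splitOnPPrepend_congr h []

theorem foldr_max_eq_iff {l : List ℕ} (hl : l ≠ []) {m : ℕ} :
    l.foldr max 0 = m ↔ m ∈ l ∧ ∀ a ∈ l, a ≤ m := by
  rw [← maximum_eq_coe_iff, ← foldr_max_of_ne_nil hl, WithBot.coe_inj, Nat.bot_eq_zero]

theorem splitOn_map_of_injOn [BEq α] [LawfulBEq α] [BEq β] [LawfulBEq β] {f : α → β}
    {l : List α} {m : α} (hm : m ∈ l) (hf : Set.InjOn f {x | x ∈ l}) :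
    (l.map f).splitOn (f m) = (l.splitOn m).map (map f) := by
  rw [splitOn_eq_splitOnP, splitOn_eq_splitOnP, splitOnP_map]
  congr 1
  exact splitOnP_congr fun x hx => by simp [hf.eq_iff hx hm]

theorem foldr_max_map_of_monotoneOn {f : ℕ → ℕ} {l : List ℕ} (hl : l ≠ [])
    (hf : MonotoneOn f {x | x ∈ l}) : (l.map f).foldr max 0 = f (l.foldr max 0) := by
  obtain ⟨hm, hle⟩ := (foldr_max_eq_iff hl).1 rfl
  rw [foldr_max_eq_iff (by simpa using hl)]
  simpa using ⟨⟨_, hm, rfl⟩, fun a ha => hf ha hm (hle a ha)⟩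

end List

open List

theorem treeOfAux_succ_of_ne_nil {n : ℕ} {w : List ℕ} (hw : w ≠ []) :
    treeOfAux (n + 1) w = .node ((w.splitOn (w.foldr max 0)).map (treeOfAux n)) := by
  cases w with
  | nil => contradiction
  | cons a l => rfl

theorem treeOfAux_map_of_strictMonoOn {f : ℕ → ℕ} (n : ℕ) (w : List ℕ) (hn : w.length ≤ n)
    (hf : StrictMonoOn f {x | x ∈ w}) : treeOfAux n (w.map f) = treeOfAux n w := by
  induction n generalizing w with
  | zero => rfl
  | succ n ih =>
    rcases eq_or_ne w [] with rfl | hw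
    · rfl
    have hm : w.foldr max 0 ∈ w := ((foldr_max_eq_iff hw).1 rfl).1
    rw [treeOfAux_succ_of_ne_nil hw, treeOfAux_succ_of_ne_nil (by simpa using hw),
      foldr_max_map_of_monotoneOn hw hf.monotoneOn, splitOn_map_of_injOn hm hf.injOn, map_map]
    congr 1
    refine map_congr_left fun v hv =>
      ih v ?_ (hf.mono fun x hx => (sublist_of_mem_splitOnP hv).subset hx)
    have := length_lt_of_mem_splitOnP hm (by simp) hv
    omega

theorem rank_lt_rank {w : List ℕ} {x y : ℕ} (hx : x ∈ w) (hxy : x < y) :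
    rank w x < rank w y := by
  rw [rank, rank, ← card_toFinset, ← card_toFinset, Nat.add_lt_add_iff_right]
  refine Finset.card_lt_card
    ((Finset.ssubset_iff_of_subset ?_).2 ⟨x, by simpa using ⟨hx, hxy⟩, by simp⟩)
  intro a
  simpa using fun ha hax => ⟨ha, hax.trans hxy⟩

theorem treeOf_pack_general (w : List ℕ) :
    treeOf w = treeOf (pack w) := by
  rw [pack, treeOf, treeOf, length_map]
  exact (treeOfAux_map_of_strictMonoOn _ w le_rfl fun x hx _ _ hxy => rank_lt_rank hx hxy).symm

/-- The plane tree `𝒯(w)` of a word `w` over the positive integers depends only on the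
packed word of `w`: `𝒯(w) = 𝒯(pack w)`. -/
theorem treeOf_pack (w : List ℕ) (hw : ∀ x ∈ w, 0 < x) :
    treeOf w = treeOf (pack w) :=
  treeOf_pack_general w
end

section
/- For every word w over the positive integers, every internal node of the plane tree 𝒯(w) has at least two children; conversely, for every plane tree T in which every internal node has at least two children, there exists a word w over the positive integers (which may be taken to be a packed word) with 𝒯(w) = T. -/
/-- The predicate "every internal node has at least two children" on plane trees. -/
inductive EveryInternalNodeHasAtLeastTwoChildren : PlaneTree → Prop
  | node (ts : List PlaneTree) (hlen : ts = [] ∨ 2 ≤ ts.length)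
      (hts : ∀ t ∈ ts, EveryInternalNodeHasAtLeastTwoChildren t) :
      EveryInternalNodeHasAtLeastTwoChildren (.node ts)

/-!
The greatest letter `m` of a nonempty word occurs in it, so splitting at `m` yields at least
two factors, each strictly shorter than the word; induction on the length gives the first half.
Conversely, suppose the subtrees `t₁, …, t_k` (`k ≥ 2`) of a node are realised by words `wᵢ`
whose letter sets are initial segments `{1, …, nᵢ}`. With the fresh letter `M = max nᵢ + 1`, the
word `w₁ M w₂ M ⋯ M w_k` has greatest letter `M`, splits at `M` back into the `wᵢ`, and its
letter set is `{1, …, M}`; a word whose letters form an initial segment is packed.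
-/

namespace List

variable {α : Type*}

theorem mem_intersperse {s a : α} :
    ∀ {l : List α}, a ∈ l.intersperse s ↔ a ∈ l ∨ a = s ∧ 2 ≤ l.length
  | [] => by simp
  | [b] => by simp
  | b :: c :: l => by
    rw [intersperse_cons_cons, mem_cons, mem_cons, mem_intersperse]
    simp only [mem_cons, length_cons]
    grind

theorem mem_intercalate {s : List α} {ls : List (List α)} {a : α} :
    a ∈ s.intercalate ls ↔ a ∈ s ∧ 2 ≤ ls.length ∨ ∃ l ∈ ls, a ∈ l := by
  simp only [intercalate, mem_flatten, mem_intersperse]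
  grind

theorem sublist_intercalate_of_mem {s l : List α} {ls : List (List α)} (h : l ∈ ls) :
    l <+ s.intercalate ls :=
  sublist_flatten_of_mem (mem_intersperse.2 (Or.inl h))

section SplitOn

variable [BEq α] [LawfulBEq α]

theorem two_le_length_splitOn {a : α} {xs : List α} (h : a ∈ xs) :
    2 ≤ (xs.splitOn a).length := by
  obtain ⟨s, t, rfl⟩ := append_of_mem h
  rw [splitOn_append_cons_self, length_append]
  have := length_pos_iff.2 (splitOn_ne_nil a s)
  have := length_pos_iff.2 (splitOn_ne_nil a t)
  omega

theorem length_le_of_mem_splitOn {a : α} {xs v : List α} (hv : v ∈ xs.splitOn a) :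
    v.length ≤ xs.length := by
  simpa using (sublist_intercalate_of_mem (s := [a]) hv).length_le

theorem length_lt_of_mem_splitOn {a : α} {xs v : List α} (ha : a ∈ xs)
    (hv : v ∈ xs.splitOn a) : v.length < xs.length := by
  obtain ⟨s, t, rfl⟩ := append_of_mem ha
  rw [splitOn_append_cons_self, mem_append] at hv
  simp only [length_append, length_cons]
  rcases hv with hv | hv <;> have := length_le_of_mem_splitOn hv <;> omega

end SplitOn

section Max

variable [LinearOrder α] [OrderBot α]

theorem foldr_max_mem {l : List α} (h : l ≠ []) : l.foldr max ⊥ ∈ l :=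
  maximum_mem (foldr_max_of_ne_nil h).symm

theorem foldr_max_eq_of_mem {l : List α} {m : α} (hm : m ∈ l) (h : ∀ x ∈ l, x ≤ m) :
    l.foldr max ⊥ = m :=
  le_antisymm (max_le_of_forall_le l m h) (le_max_of_le hm le_rfl)

end Max

theorem exists_map_eq_of_forall_mem {β : Type*} {f : α → β} {p : α → Prop} :
    ∀ {bs : List β}, (∀ b ∈ bs, ∃ a, p a ∧ f a = b) →
      ∃ as : List α, (∀ a ∈ as, p a) ∧ as.map f = bs
  | [], _ => ⟨[], by simp, rfl⟩
  | b :: bs, h => by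
    obtain ⟨a, ha, rfl⟩ := h b mem_cons_self
    obtain ⟨as, has, rfl⟩ := exists_map_eq_of_forall_mem fun b hb => h b (mem_cons_of_mem _ hb)
    exact ⟨a :: as, forall_mem_cons.2 ⟨ha, has⟩, rfl⟩

end List

theorem treeOfAux_eq_treeOf : ∀ {w : List ℕ} {n : ℕ}, w.length ≤ n → treeOfAux n w = treeOf w
  | [], 0, _ | [], _ + 1, _ => rfl
  | a :: l, n + 1, hn => by
    rw [treeOf, List.length_cons, treeOfAux, treeOfAux]
    congr 1
    refine List.map_congr_left fun v hv => ?_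
    have hlt := List.length_lt_of_mem_splitOn (List.foldr_max_mem (List.cons_ne_nil a l)) hv
    rw [List.length_cons] at hn hlt
    rw [treeOfAux_eq_treeOf (by omega), treeOfAux_eq_treeOf (by omega)]
termination_by w => w.length
decreasing_by all_goals exact hlt

theorem treeOf_of_ne_nil {w : List ℕ} (hw : w ≠ []) :
    treeOf w = .node ((w.splitOn (w.foldr max 0)).map treeOf) := by
  obtain ⟨a, l, rfl⟩ := List.exists_cons_of_ne_nil hw
  rw [treeOf, List.length_cons, treeOfAux]
  congr 1
  refine List.map_congr_left fun v hv => treeOfAux_eq_treeOf ?_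
  simpa using List.length_lt_of_mem_splitOn (List.foldr_max_mem hw) hv

theorem everyInternalNodeHasAtLeastTwoChildren_treeOf (w : List ℕ) :
    EveryInternalNodeHasAtLeastTwoChildren (treeOf w) := by
  rcases eq_or_ne w [] with rfl | hw
  · exact .node [] (.inl rfl) (by simp)
  have hmax := List.foldr_max_mem hw
  rw [treeOf_of_ne_nil hw]
  refine .node _ (.inr ?_) fun t ht => ?_
  · simpa using List.two_le_length_splitOn hmax
  · obtain ⟨v, hv, rfl⟩ := List.mem_map.1 ht
    have := List.length_lt_of_mem_splitOn hmax hv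
    exact everyInternalNodeHasAtLeastTwoChildren_treeOf v
termination_by w.length

theorem treeOf_intercalate {ws : List (List ℕ)} {M : ℕ} (hws : 2 ≤ ws.length)
    (hM : ∀ w ∈ ws, ∀ x ∈ w, x < M) : treeOf ([M].intercalate ws) = .node (ws.map treeOf) := by
  have hMmem : M ∈ [M].intercalate ws := List.mem_intercalate.2 (.inl ⟨by simp, hws⟩)
  have hmax : ([M].intercalate ws).foldr max 0 = M := by
    refine List.foldr_max_eq_of_mem hMmem fun x hx => ?_
    rcases List.mem_intercalate.1 hx with ⟨hx, -⟩ | ⟨w, hw, hxw⟩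
    · exact (List.mem_singleton.1 hx).le
    · exact (hM w hw x hxw).le
  rw [treeOf_of_ne_nil (List.ne_nil_of_mem hMmem), hmax,
    List.splitOn_intercalate M (fun w hw hMw => (hM w hw M hMw).false)
      (List.ne_nil_of_length_pos (by omega))]

theorem pack_eq_self_of_toFinset_eq_Icc {w : List ℕ} {n : ℕ} (h : w.toFinset = Finset.Icc 1 n) :
    pack w = w := by
  refine (List.map_congr_left fun x hx => ?_).trans w.map_id
  have hx : 1 ≤ x ∧ x ≤ n := Finset.mem_Icc.1 (h ▸ List.mem_toFinset.2 hx)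
  have hbelow : w.toFinset.filter (fun y => decide (y < x)) = Finset.Icc 1 (x - 1) := by
    rw [h]; ext y; simp only [Finset.mem_filter, Finset.mem_Icc, decide_eq_true_eq]; omega
  rw [rank, ← List.card_toFinset, List.toFinset_filter, hbelow, Nat.card_Icc, id]
  omega

theorem toFinset_flatten_eq_Icc {ws : List (List ℕ)}
    (h : ∀ w ∈ ws, ∃ n, w.toFinset = Finset.Icc 1 n) :
    ws.flatten.toFinset = Finset.Icc 1 (ws.flatten.foldr max 0) := by
  have hdown : ∀ w ∈ ws, ∀ x ∈ w, 1 ≤ x ∧ ∀ y, 1 ≤ y → y ≤ x → y ∈ w := by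
    intro w hw x hx
    obtain ⟨n, hn⟩ := h w hw
    simp only [← List.mem_toFinset, hn, Finset.mem_Icc] at hx ⊢
    exact ⟨hx.1, fun y hy1 hyx => ⟨hy1, hyx.trans hx.2⟩⟩
  ext y
  rw [List.mem_toFinset, Finset.mem_Icc]
  constructor
  · intro hy
    obtain ⟨w, hw, hyw⟩ := List.mem_flatten.1 hy
    exact ⟨(hdown w hw y hyw).1, List.le_max_of_le hy le_rfl⟩
  · rintro ⟨hy1, hyN⟩
    have hne : ws.flatten ≠ [] := by rintro hnil; simp [hnil] at hyN; omega
    obtain ⟨w, hw, hNw⟩ := List.mem_flatten.1 (List.foldr_max_mem hne)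
    exact List.mem_flatten_of_mem hw ((hdown w hw _ hNw).2 y hy1 hyN)

theorem EveryInternalNodeHasAtLeastTwoChildren.exists_toFinset_eq_Icc_treeOf_eq {t : PlaneTree}
    (ht : EveryInternalNodeHasAtLeastTwoChildren t) :
    ∃ w : List ℕ, ∃ n, w.toFinset = Finset.Icc 1 n ∧ treeOf w = t := by
  induction ht with
  | node ts hlen _ ih =>
    rcases hlen with rfl | hlen
    · exact ⟨[], 0, rfl, rfl⟩
    obtain ⟨ws, hws, rfl⟩ := List.exists_map_eq_of_forall_mem
      (p := fun w => ∃ n, w.toFinset = Finset.Icc 1 n) (f := treeOf) fun t ht => by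
        obtain ⟨w, n, hw, rfl⟩ := ih t ht
        exact ⟨w, ⟨n, hw⟩, rfl⟩
    rw [List.length_map] at hlen
    set N := ws.flatten.foldr max 0
    have hletters := toFinset_flatten_eq_Icc hws
    refine ⟨[N + 1].intercalate ws, N + 1, ?_, ?_⟩
    · ext x
      simp only [List.mem_toFinset, List.mem_intercalate, List.mem_singleton, ← List.mem_flatten,
        ← List.mem_toFinset (l := ws.flatten), hletters, Finset.mem_Icc]
      omega
    · refine treeOf_intercalate hlen fun w hw x hx => Nat.lt_succ_of_le ?_
      exact List.le_max_of_le (List.mem_flatten_of_mem hw hx) le_rfl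

/-- Every internal node of the plane tree `𝒯(w)` of a word `w` over the positive
integers has at least two children; conversely, every plane tree all of whose internal
nodes have at least two children is of the form `𝒯(w)` for some word `w`, which may be
taken to be a packed word. -/
theorem treeOf_internal_nodes :
    (∀ w : List ℕ, (∀ x ∈ w, 0 < x) →
        EveryInternalNodeHasAtLeastTwoChildren (treeOf w)) ∧
    (∀ t : PlaneTree, EveryInternalNodeHasAtLeastTwoChildren t →
        ∃ w : List ℕ, pack w = w ∧ treeOf w = t) := by
  refine ⟨fun w _ => everyInternalNodeHasAtLeastTwoChildren_treeOf w, fun t ht => ?_⟩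
  obtain ⟨w, n, hw, rfl⟩ := ht.exists_toFinset_eq_Icc_treeOf_eq
  exact ⟨w, pack_eq_self_of_toFinset_eq_Icc hw, rfl⟩
end

section
/- Let P = MvPolynomial ℕ ℚ and define on its augmentation ideal the three bilinear operations ≺, ∘, ≻ on nonconstant monomials by the max-variable rule. Then these operations satisfy all the dendriform trialgebra axioms: ∘ is associative, and for all x, y, z in P (extending the operations by 0 when a constant monomial is involved): (x ≺ y) ≺ z = x ≺ (y ≺ z + y ∘ z + y ≻ z), (x ≻ y) ≺ z = x ≻ (y ≺ z), (x ≺ y + x ∘ y + x ≻ y) ≻ z = x ≻ (y ≻ z), (x ≻ y) ∘ z = x ≻ (y ∘ z), (x ≺ y) ∘ z = x ∘ (y ≻ z), and (x ∘ y) ≺ z = x ∘ (y ≺ z); moreover x ≺ y + x ∘ y + x ≻ y = x·y whenever x and y are nonconstant monomials. This is the commutative dendriform trialgebra structure whose image realizes the free commutative dendriform trialgebra inside quasi-symmetric functions. -/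
open Classical

/-- The right operation `≻` on `MvPolynomial ℕ ℚ`: on monomials, `m ≻ m' = m m'` if `m`
and `m'` are both nonconstant and the largest variable index of `m` is smaller than that
of `m'`, and `0` otherwise; extended bilinearly. -/
noncomputable def pSucc (x y : MvPolynomial ℕ ℚ) : MvPolynomial ℕ ℚ :=
  x.support.sum fun m => y.support.sum fun m' =>
    if m ≠ 0 ∧ m' ≠ 0 ∧ m.support.max < m'.support.max
    then MvPolynomial.monomial (m + m') (x.coeff m * y.coeff m') else 0

/-- The middle operation `∘` on `MvPolynomial ℕ ℚ`: on monomials, `m ∘ m' = m m'` if `m`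
and `m'` are both nonconstant with the same largest variable index, and `0` otherwise;
extended bilinearly. -/
noncomputable def pCirc (x y : MvPolynomial ℕ ℚ) : MvPolynomial ℕ ℚ :=
  x.support.sum fun m => y.support.sum fun m' =>
    if m ≠ 0 ∧ m' ≠ 0 ∧ m.support.max = m'.support.max
    then MvPolynomial.monomial (m + m') (x.coeff m * y.coeff m') else 0

/-- The left operation `≺` on `MvPolynomial ℕ ℚ`: on monomials, `m ≺ m' = m m'` if `m`
and `m'` are both nonconstant and the largest variable index of `m` is greater than that
of `m'`, and `0` otherwise; extended bilinearly. -/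
noncomputable def pPrec (x y : MvPolynomial ℕ ℚ) : MvPolynomial ℕ ℚ :=
  x.support.sum fun m => y.support.sum fun m' =>
    if m ≠ 0 ∧ m' ≠ 0 ∧ m'.support.max < m.support.max
    then MvPolynomial.monomial (m + m') (x.coeff m * y.coeff m') else 0

/- The three operations are all of one shape: the product restricted to the pairs of monomials
whose largest variables, taken in `WithBot ℕ` with `⊥` for the constant monomial, satisfy an order
relation. Because the largest variable of `m m'` is the maximum of those of `m` and `m'`, an
identity between two iterated restricted products holds as soon as the relations agree on every
triple of monomials, and each axiom becomes an equivalence of order conditions on three elements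
of a linear order. -/

open Function

namespace MvPolynomial

variable {σ R : Type*} [CommSemiring R]

noncomputable def restrictedMul (p : (σ →₀ ℕ) → (σ →₀ ℕ) → Prop) :
    MvPolynomial σ R →ₗ[R] MvPolynomial σ R →ₗ[R] MvPolynomial σ R :=
  (basisMonomials σ R).constr R fun m => (basisMonomials σ R).constr R fun m' =>
    if p m m' then monomial (m + m') 1 else 0

theorem restrictedMul_monomial (p : (σ →₀ ℕ) → (σ →₀ ℕ) → Prop) (m m' : σ →₀ ℕ) (a b : R) :
    restrictedMul p (monomial m a) (monomial m' b) =
      if p m m' then monomial (m + m') (a * b) else 0 := by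
  have monomial_eq_smul (n : σ →₀ ℕ) (c : R) : monomial n c = c • basisMonomials σ R n := by
    rw [coe_basisMonomials, smul_monomial, smul_eq_mul, mul_one]
  simp only [restrictedMul, monomial_eq_smul m, monomial_eq_smul m', map_smul,
    LinearMap.smul_apply, Module.Basis.constr_basis]
  split_ifs <;> simp [smul_monomial, mul_comm]

theorem restrictedMul_apply (p : (σ →₀ ℕ) → (σ →₀ ℕ) → Prop) (x y : MvPolynomial σ R) :
    restrictedMul p x y = ∑ m ∈ x.support, ∑ m' ∈ y.support,
      if p m m' then monomial (m + m') (x.coeff m * y.coeff m') else 0 := by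
  conv_lhs => rw [x.as_sum, y.as_sum]
  simp only [map_sum, LinearMap.sum_apply, restrictedMul_monomial]
  exact Finset.sum_comm

theorem restrictedMul_restrictedMul {p q r s : (σ →₀ ℕ) → (σ →₀ ℕ) → Prop}
    (h : ∀ a b c, p a b ∧ q (a + b) c ↔ s b c ∧ r a (b + c)) (x y z : MvPolynomial σ R) :
    restrictedMul q (restrictedMul p x y) z = restrictedMul r x (restrictedMul s y z) := by
  induction x using MvPolynomial.induction_on' with
  | add x x' hx hx' => simp only [map_add, LinearMap.add_apply, hx, hx']
  | monomial m a =>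
  induction y using MvPolynomial.induction_on' with
  | add y y' hy hy' => simp only [map_add, LinearMap.add_apply, hy, hy']
  | monomial m' b =>
  induction z using MvPolynomial.induction_on' with
  | add z z' hz hz' => simp only [map_add, hz, hz']
  | monomial m'' c =>
    simp only [restrictedMul_monomial, apply_ite (fun u => restrictedMul q u (monomial m'' c)),
      apply_ite (restrictedMul r (monomial m a)), map_zero, LinearMap.zero_apply]
    rw [← ite_and, ← ite_and]
    exact if_congr (h m m' m'') (by rw [add_assoc, mul_assoc]) rfl

theorem restrictedMul_add_restrictedMul {p q : (σ →₀ ℕ) → (σ →₀ ℕ) → Prop}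
    (h : ∀ m m', p m m' → ¬ q m m') (x y : MvPolynomial σ R) :
    restrictedMul p x y + restrictedMul q x y =
      restrictedMul (fun m m' => p m m' ∨ q m m') x y := by
  rw [← LinearMap.add_apply, ← LinearMap.add_apply]
  refine LinearMap.congr_fun₂
    ((basisMonomials σ R).ext fun m => (basisMonomials σ R).ext fun m' => ?_) x y
  simp only [coe_basisMonomials, LinearMap.add_apply, restrictedMul_monomial]
  by_cases hp : p m m'
  · simp [hp, h m m' hp]
  · simp [hp]

section MaxVar

variable [LinearOrder σ]

def maxVar (m : σ →₀ ℕ) : WithBot σ := m.support.max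

theorem maxVar_add (m m' : σ →₀ ℕ) : maxVar (m + m') = maxVar m ⊔ maxVar m' := by
  simp only [maxVar, Finsupp.support_add_eq_union, Finset.max_union]

theorem bot_lt_maxVar_iff {m : σ →₀ ℕ} : ⊥ < maxVar m ↔ m ≠ 0 := by
  rw [bot_lt_iff_ne_bot, ne_eq, maxVar, Finset.max_eq_bot, Finsupp.support_eq_empty]

theorem restrictedMul_restrictedMul_of_maxVar {p q r s : WithBot σ → WithBot σ → Prop}
    (h : ∀ a b c, p a b ∧ q (a ⊔ b) c ↔ s b c ∧ r a (b ⊔ c)) (x y z : MvPolynomial σ R) :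
    restrictedMul (q on maxVar) (restrictedMul (p on maxVar) x y) z =
      restrictedMul (r on maxVar) x (restrictedMul (s on maxVar) y z) :=
  restrictedMul_restrictedMul (fun a b c => by simpa only [onFun, maxVar_add] using h _ _ _) x y z

end MaxVar

end MvPolynomial

open MvPolynomial

theorem pPrec_eq_restrictedMul (x y : MvPolynomial ℕ ℚ) :
    pPrec x y = restrictedMul ((fun a b => ⊥ < b ∧ b < a) on maxVar) x y := by
  rw [pPrec, restrictedMul_apply]
  refine Finset.sum_congr rfl fun m _ => Finset.sum_congr rfl fun m' _ => ?_
  congr 1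
  rw [← bot_lt_maxVar_iff, ← bot_lt_maxVar_iff]
  exact propext ⟨fun ⟨_, hb, hba⟩ => ⟨hb, hba⟩, fun ⟨hb, hba⟩ => ⟨hb.trans hba, hb, hba⟩⟩

theorem pCirc_eq_restrictedMul (x y : MvPolynomial ℕ ℚ) :
    pCirc x y = restrictedMul ((fun a b => ⊥ < a ∧ a = b) on maxVar) x y := by
  rw [pCirc, restrictedMul_apply]
  refine Finset.sum_congr rfl fun m _ => Finset.sum_congr rfl fun m' _ => ?_
  congr 1
  rw [← bot_lt_maxVar_iff, ← bot_lt_maxVar_iff]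
  exact propext ⟨fun ⟨ha, _, hab⟩ => ⟨ha, hab⟩, fun ⟨ha, hab⟩ => ⟨ha, hab ▸ ha, hab⟩⟩

theorem pSucc_eq_restrictedMul (x y : MvPolynomial ℕ ℚ) :
    pSucc x y = restrictedMul ((fun a b => ⊥ < a ∧ a < b) on maxVar) x y := by
  rw [pSucc, restrictedMul_apply]
  refine Finset.sum_congr rfl fun m _ => Finset.sum_congr rfl fun m' _ => ?_
  congr 1
  rw [← bot_lt_maxVar_iff, ← bot_lt_maxVar_iff]
  exact propext ⟨fun ⟨ha, _, hab⟩ => ⟨ha, hab⟩, fun ⟨ha, hab⟩ => ⟨ha, ha.trans hab, hab⟩⟩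

theorem pPrec_add_pCirc_add_pSucc (x y : MvPolynomial ℕ ℚ) :
    pPrec x y + pCirc x y + pSucc x y =
      restrictedMul ((fun a b => ⊥ < a ∧ ⊥ < b) on maxVar) x y := by
  rw [pPrec_eq_restrictedMul, pCirc_eq_restrictedMul, pSucc_eq_restrictedMul,
    restrictedMul_add_restrictedMul (by grind), restrictedMul_add_restrictedMul (by grind)]
  congr! 3 with m m'
  grind

/-- The operations `≺`, `∘`, `≻` defined on `MvPolynomial ℕ ℚ` by the max-variable rule
satisfy all the dendriform trialgebra axioms, and they split the associative commutative
product on nonconstant monomials. -/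
theorem mvPolynomial_dendriform_trialgebra :
    (∀ x y z : MvPolynomial ℕ ℚ, pCirc (pCirc x y) z = pCirc x (pCirc y z)) ∧
    (∀ x y z : MvPolynomial ℕ ℚ,
        pPrec (pPrec x y) z = pPrec x (pPrec y z + pCirc y z + pSucc y z)) ∧
    (∀ x y z : MvPolynomial ℕ ℚ, pPrec (pSucc x y) z = pSucc x (pPrec y z)) ∧
    (∀ x y z : MvPolynomial ℕ ℚ,
        pSucc (pPrec x y + pCirc x y + pSucc x y) z = pSucc x (pSucc y z)) ∧
    (∀ x y z : MvPolynomial ℕ ℚ, pCirc (pSucc x y) z = pSucc x (pCirc y z)) ∧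
    (∀ x y z : MvPolynomial ℕ ℚ, pCirc (pPrec x y) z = pCirc x (pSucc y z)) ∧
    (∀ x y z : MvPolynomial ℕ ℚ, pPrec (pCirc x y) z = pCirc x (pPrec y z)) ∧
    (∀ m m' : ℕ →₀ ℕ, m ≠ 0 → m' ≠ 0 →
        pPrec (MvPolynomial.monomial m (1 : ℚ)) (MvPolynomial.monomial m' (1 : ℚ)) +
          pCirc (MvPolynomial.monomial m (1 : ℚ)) (MvPolynomial.monomial m' (1 : ℚ)) +
          pSucc (MvPolynomial.monomial m (1 : ℚ)) (MvPolynomial.monomial m' (1 : ℚ)) =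
        MvPolynomial.monomial m (1 : ℚ) * MvPolynomial.monomial m' (1 : ℚ)) := by
  simp only [pPrec_add_pCirc_add_pSucc]
  simp only [pPrec_eq_restrictedMul, pCirc_eq_restrictedMul, pSucc_eq_restrictedMul]
  refine ⟨?_, ?_, ?_, ?_, ?_, ?_, ?_, fun m m' hm hm' => ?_⟩
  iterate 7 exact restrictedMul_restrictedMul_of_maxVar (by grind)
  rw [restrictedMul_monomial, monomial_mul,
    if_pos ⟨bot_lt_maxVar_iff.2 hm, bot_lt_maxVar_iff.2 hm'⟩]
end
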